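/- (φ + √φ)² is the largest real root of x⁴ - 8x³ - 2x² - 8x + 1, where φ = (1+√5)/2. -/
import Mathlib


/-- `(φ + √φ)²` is the largest real root of `x⁴ - 8x³ - 2x² - 8x + 1`,
where `φ = (1+√5)/2` is the Golden Ratio. -/
theorem stmt16 :
    IsGreatest {x : ℝ | x ^ 4 - 8 * x ^ 3 - 2 * x ^ 2 - 8 * x + 1 = 0}
      (((1 + Real.sqrt 5) / 2 + Real.sqrt ((1 + Real.sqrt 5) / 2)) ^ 2) := by
  have hs5 : Real.sqrt 5 ^ 2 = 5 := Real.sq_sqrt (by norm_num)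
  have hs5gt : 2 < Real.sqrt 5 := by
    nlinarith [Real.sqrt_nonneg 5]
  set s5 := Real.sqrt 5 with hs5def
  have hppos : (0:ℝ) ≤ (1 + s5)/2 := by nlinarith
  have hsp : Real.sqrt ((1 + s5)/2) ^ 2 = (1 + s5)/2 := Real.sq_sqrt hppos
  set sp := Real.sqrt ((1 + s5)/2) with hspdef
  have hspgt : 1 < sp := by
    nlinarith [Real.sqrt_nonneg ((1 + s5)/2)]
  set l := ((1 + s5)/2 + sp) ^ 2 with hldef
  have hq : l ^ 2 - (4 + 2*s5) * l + 1 = 0 := by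
    rw [hldef]
    linear_combination (3/16 + 1/2*sp + 1/2*s5 + 1/2*s5*sp + 1/16*s5^2) * hs5
      + (-2 + 2*sp + sp^2 + 3/2*s5 + 2*s5*sp + 3/2*s5^2) * hsp
  constructor
  · show l ^ 4 - 8 * l ^ 3 - 2 * l ^ 2 - 8 * l + 1 = 0
    linear_combination (l ^ 2 - (4 - 2*s5) * l + 1) * hq + 4 * l^2 * hs5
  · intro x hx
    have hx' : x ^ 4 - 8 * x ^ 3 - 2 * x ^ 2 - 8 * x + 1 = 0 := hx
    have hfact : (x ^ 2 - (4 + 2*s5) * x + 1) * (x ^ 2 - (4 - 2*s5) * x + 1) = 0 := by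
      linear_combination hx' - 4 * x^2 * hs5
    rcases mul_eq_zero.mp hfact with h | h
    · by_contra hgt
      push_neg at hgt
      nlinarith [sq_nonneg (x - l), mul_pos (by nlinarith : (0:ℝ) < (1+s5)/2) (by nlinarith : (0:ℝ) < sp)]
    · exfalso
      nlinarith [sq_nonneg (x - (2 - s5))]
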